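/- Let μ be a finite (nonnegative) Borel measure on [0, 2π), regarded as the circle, and define F(x) = ∫_{[0,2π)} σ(x + θ) dμ(θ) for x ∈ ℝ, where σ is the 2π-periodic sawtooth function. Then for every x₀ ∈ ℝ the one-sided limits F(x₀+0) and F(x₀−0) exist, and F(x₀+0) − F(x₀−0) = π · μ({θ ∈ [0,2π) : x₀ + θ ∈ 2πℤ}). In particular, F is continuous at x₀ if and only if μ has no atom at the unique point of [0,2π) congruent to −x₀ modulo 2π. -/

import Mathlib

open Filter Topology MeasureTheory
open scoped Classical

/-- The `2π`-periodic sawtooth function: `σ(y) = (π − y)/2` for `y ∈ (0, 2π)`, `σ(y) = 0` for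
`y ∈ 2πℤ`, extended `2π`-periodically to all of `ℝ`. -/
noncomputable def sawtooth (y : ℝ) : ℝ :=
  if ∃ k : ℤ, y = 2 * Real.pi * k then 0
  else (Real.pi - 2 * Real.pi * Int.fract (y / (2 * Real.pi))) / 2

lemma two_pi_pos : (0:ℝ) < 2 * Real.pi := by positivity

lemma fract_tendsto_right (t : ℝ) : Tendsto Int.fract (𝓝[≥] t) (𝓝 (Int.fract t)) := by
  have hmem : Set.Ico (t : ℝ) (⌊t⌋ + 1) ∈ 𝓝[≥] t := by
    refine inter_mem self_mem_nhdsWithin ?_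
    exact nhdsWithin_le_nhds (Iio_mem_nhds (Int.lt_floor_add_one t))
  have h1 : Tendsto (fun s : ℝ => s - ⌊t⌋) (𝓝[≥] t) (𝓝 (t - ⌊t⌋)) :=
    ((continuous_id.sub continuous_const).tendsto t).mono_left nhdsWithin_le_nhds
  refine h1.congr' ?_
  filter_upwards [hmem] with s hs
  have : ⌊s⌋ = ⌊t⌋ := by
    rw [Int.floor_eq_iff]
    exact ⟨(Int.floor_le t).trans hs.1, hs.2⟩
  rw [Int.fract, this]

lemma fract_tendsto_left (t : ℝ) :
    Tendsto Int.fract (𝓝[<] t) (𝓝 (if ∃ n : ℤ, t = n then 1 else Int.fract t)) := by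
  split_ifs with h
  · obtain ⟨n, rfl⟩ := h
    exact tendsto_fract_left' n
  · have ht : t ≠ ⌊t⌋ := by
      intro hc; exact h ⟨⌊t⌋, hc⟩
    exact (continuousAt_fract ht).tendsto.mono_left nhdsWithin_le_nhds

lemma not_mult_right (y : ℝ) : ∀ᶠ z in 𝓝[>] y, ¬ ∃ k : ℤ, z = 2 * Real.pi * k := by
  have hlt : y < 2 * Real.pi * (⌊y / (2 * Real.pi)⌋ + 1) := by
    have := Int.lt_floor_add_one (y / (2 * Real.pi))
    calc y = 2 * Real.pi * (y / (2 * Real.pi)) := by field_simp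
    _ < 2 * Real.pi * (⌊y / (2 * Real.pi)⌋ + 1) := by
        exact (mul_lt_mul_iff_right₀ two_pi_pos).2 (by exact_mod_cast this)
  filter_upwards [Ioo_mem_nhdsGT_of_mem ⟨le_refl y, hlt⟩] with z hz
  rintro ⟨k, rfl⟩
  have h1 : (⌊y / (2 * Real.pi)⌋ : ℝ) < k := by
    have := hz.1
    have h2 : y / (2 * Real.pi) < k := (div_lt_iff₀ two_pi_pos).2 (by linarith [hz.1])
    exact lt_of_le_of_lt (Int.floor_le _) h2
  have h3 : (⌊y / (2 * Real.pi)⌋ : ℤ) + 1 ≤ k := by exact_mod_cast h1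
  have h4 : 2 * Real.pi * (⌊y / (2 * Real.pi)⌋ + 1) ≤ 2 * Real.pi * k := by
    have : ((⌊y / (2 * Real.pi)⌋ : ℝ) + 1) ≤ (k : ℝ) := by exact_mod_cast h3
    exact (mul_le_mul_iff_right₀ two_pi_pos).2 this
  linarith [hz.2]

lemma not_mult_left (y : ℝ) : ∀ᶠ z in 𝓝[<] y, ¬ ∃ k : ℤ, z = 2 * Real.pi * k := by
  have hlt : 2 * Real.pi * (⌈y / (2 * Real.pi)⌉ - 1) < y := by
    have := Int.ceil_lt_add_one (y / (2 * Real.pi))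
    calc 2 * Real.pi * (⌈y / (2 * Real.pi)⌉ - 1) < 2 * Real.pi * (y / (2 * Real.pi)) := by
          exact (mul_lt_mul_iff_right₀ two_pi_pos).2 (by push_cast; linarith)
    _ = y := by field_simp
  filter_upwards [Ioo_mem_nhdsLT_of_mem ⟨hlt, le_refl y⟩] with z hz
  rintro ⟨k, rfl⟩
  have h2 : (k : ℝ) < y / (2 * Real.pi) := (lt_div_iff₀ two_pi_pos).2 (by linarith [hz.2])
  have h3 : k ≤ ⌈y / (2 * Real.pi)⌉ - 1 := by
    by_contra hc
    push_neg at hc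
    have : ⌈y / (2 * Real.pi)⌉ ≤ k := by omega
    have : (y / (2 * Real.pi)) ≤ (k : ℝ) := le_trans (Int.le_ceil _) (by exact_mod_cast this)
    linarith
  have h4 : 2 * Real.pi * k ≤ 2 * Real.pi * (⌈y / (2 * Real.pi)⌉ - 1) := by
    have : (k : ℝ) ≤ (⌈y / (2 * Real.pi)⌉ : ℝ) - 1 := by exact_mod_cast h3
    exact (mul_le_mul_iff_right₀ two_pi_pos).2 (by push_cast; linarith)
  linarith [hz.1]

lemma sawtooth_tendsto_right (y : ℝ) :
    Tendsto sawtooth (𝓝[>] y)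
      (𝓝 ((Real.pi - 2 * Real.pi * Int.fract (y / (2 * Real.pi))) / 2)) := by
  have hdiv : Tendsto (fun z : ℝ => z / (2 * Real.pi)) (𝓝[>] y) (𝓝[≥] (y / (2 * Real.pi))) := by
    apply tendsto_nhdsWithin_of_tendsto_nhds_of_eventually_within
    · exact ((continuous_id.div_const _).tendsto y).mono_left nhdsWithin_le_nhds
    · filter_upwards [self_mem_nhdsWithin] with z hz
      have : y / (2 * Real.pi) ≤ z / (2 * Real.pi) := by gcongr; exact hz.le
      exact this
  have hfr : Tendsto (fun z : ℝ => Int.fract (z / (2 * Real.pi))) (𝓝[>] y)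
      (𝓝 (Int.fract (y / (2 * Real.pi)))) := (fract_tendsto_right _).comp hdiv
  have hform : Tendsto (fun z : ℝ => (Real.pi - 2 * Real.pi * Int.fract (z / (2 * Real.pi))) / 2)
      (𝓝[>] y) (𝓝 ((Real.pi - 2 * Real.pi * Int.fract (y / (2 * Real.pi))) / 2)) :=
    ((tendsto_const_nhds.sub (tendsto_const_nhds.mul hfr)).div_const 2)
  refine hform.congr' ?_
  filter_upwards [not_mult_right y] with z hz
  simp [sawtooth, hz]

lemma sawtooth_tendsto_left (y : ℝ) :
    Tendsto sawtooth (𝓝[<] y)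
      (𝓝 ((Real.pi - 2 * Real.pi *
        (if ∃ k : ℤ, y = 2 * Real.pi * k then 1 else Int.fract (y / (2 * Real.pi)))) / 2)) := by
  have hdiv : Tendsto (fun z : ℝ => z / (2 * Real.pi)) (𝓝[<] y) (𝓝[<] (y / (2 * Real.pi))) := by
    apply tendsto_nhdsWithin_of_tendsto_nhds_of_eventually_within
    · exact ((continuous_id.div_const _).tendsto y).mono_left nhdsWithin_le_nhds
    · filter_upwards [self_mem_nhdsWithin] with z hz
      have : z / (2 * Real.pi) < y / (2 * Real.pi) := by gcongr; exact hz
      exact this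
  have hiff : (∃ k : ℤ, y = 2 * Real.pi * k) ↔ ∃ n : ℤ, y / (2 * Real.pi) = n := by
    constructor
    · rintro ⟨k, rfl⟩; exact ⟨k, by field_simp⟩
    · rintro ⟨n, hn⟩; exact ⟨n, by field_simp at hn; linarith⟩
  have hfr : Tendsto (fun z : ℝ => Int.fract (z / (2 * Real.pi))) (𝓝[<] y)
      (𝓝 (if ∃ k : ℤ, y = 2 * Real.pi * k then 1 else Int.fract (y / (2 * Real.pi)))) := by
    have := (fract_tendsto_left (y / (2 * Real.pi))).comp hdiv
    simpa only [hiff, Function.comp_def] using this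
  have hform : Tendsto (fun z : ℝ => (Real.pi - 2 * Real.pi * Int.fract (z / (2 * Real.pi))) / 2)
      (𝓝[<] y) (𝓝 ((Real.pi - 2 * Real.pi *
        (if ∃ k : ℤ, y = 2 * Real.pi * k then 1 else Int.fract (y / (2 * Real.pi)))) / 2)) :=
    ((tendsto_const_nhds.sub (tendsto_const_nhds.mul hfr)).div_const 2)
  refine hform.congr' ?_
  filter_upwards [not_mult_left y] with z hz
  simp [sawtooth, hz]

lemma abs_sawtooth_le (y : ℝ) : |sawtooth y| ≤ Real.pi := by
  unfold sawtooth
  split_ifs with h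
  · simp [Real.pi_pos.le]
  · have h1 := Int.fract_nonneg (y / (2 * Real.pi))
    have h2 := Int.fract_lt_one (y / (2 * Real.pi))
    rw [abs_le]
    constructor <;> nlinarith [Real.pi_pos]

lemma measurable_sawtooth : Measurable sawtooth := by
  unfold sawtooth
  apply Measurable.ite
  · have : {y : ℝ | ∃ k : ℤ, y = 2 * Real.pi * k} ⊆ Set.range (fun k : ℤ => 2 * Real.pi * k) := by
      rintro y ⟨k, rfl⟩; exact ⟨k, rfl⟩
    exact (Set.Countable.mono this (Set.countable_range _)).measurableSet
  · exact measurable_const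
  · exact ((measurable_const.sub (measurable_const.mul
      ((measurable_id.div_const _).fract))).div_const 2)

/-- Let `μ` be a finite Borel measure on `[0, 2π)` (regarded as the circle)
and define `F(x) = ∫ σ(x + θ) dμ(θ)`, `σ` the `2π`-periodic sawtooth. Then for every `x₀ ∈ ℝ`
the one-sided limits `F(x₀±0)` exist and
`F(x₀+0) − F(x₀−0) = π · μ({θ ∈ [0,2π) : x₀ + θ ∈ 2πℤ})`; in particular `F` is continuous at
`x₀` iff `μ` has no atom at the unique point of `[0,2π)` congruent to `−x₀` mod `2π`. -/
theorem statement13 (μ : Measure ℝ) [IsFiniteMeasure μ]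
    (hsupp : μ (Set.Ico 0 (2 * Real.pi))ᶜ = 0)
    (F : ℝ → ℝ)
    (hF : ∀ x : ℝ, F x = ∫ θ : ℝ, sawtooth (x + θ) ∂μ) :
    ∀ x₀ : ℝ, ∃ Lp Lm : ℝ,
      Tendsto F (𝓝[>] x₀) (𝓝 Lp) ∧ Tendsto F (𝓝[<] x₀) (𝓝 Lm) ∧
      Lp - Lm = Real.pi *
        (μ {θ : ℝ | θ ∈ Set.Ico 0 (2 * Real.pi) ∧ ∃ k : ℤ, x₀ + θ = 2 * Real.pi * k}).toReal ∧
      (ContinuousAt F x₀ ↔ μ {2 * Real.pi * Int.fract (-x₀ / (2 * Real.pi))} = 0) := by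
  intro x₀
  set pt : ℝ := 2 * Real.pi * Int.fract (-x₀ / (2 * Real.pi)) with hpt_def
  set gp : ℝ → ℝ := fun θ => (Real.pi - 2 * Real.pi * Int.fract ((x₀ + θ) / (2 * Real.pi))) / 2
    with hgp_def
  set gm : ℝ → ℝ := fun θ => (Real.pi - 2 * Real.pi *
      (if ∃ k : ℤ, x₀ + θ = 2 * Real.pi * k then 1
       else Int.fract ((x₀ + θ) / (2 * Real.pi)))) / 2 with hgm_def
  set A : Set ℝ := {θ | ∃ k : ℤ, x₀ + θ = 2 * Real.pi * k} with hA_def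
  have hAm : MeasurableSet A := by
    have : A ⊆ Set.range (fun k : ℤ => 2 * Real.pi * k - x₀) := by
      rintro θ ⟨k, hk⟩
      exact ⟨k, show 2 * Real.pi * (k : ℝ) - x₀ = θ by linarith⟩
    exact (Set.Countable.mono this (Set.countable_range _)).measurableSet
  -- translations of one-sided nbhds
  have haddr : ∀ θ : ℝ, Tendsto (fun x : ℝ => x + θ) (𝓝[>] x₀) (𝓝[>] (x₀ + θ)) := by
    intro θ
    apply tendsto_nhdsWithin_of_tendsto_nhds_of_eventually_within
    · exact ((continuous_id.add continuous_const).tendsto x₀).mono_left nhdsWithin_le_nhds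
    · filter_upwards [self_mem_nhdsWithin] with x hx
      exact add_lt_add_left hx θ
  have haddl : ∀ θ : ℝ, Tendsto (fun x : ℝ => x + θ) (𝓝[<] x₀) (𝓝[<] (x₀ + θ)) := by
    intro θ
    apply tendsto_nhdsWithin_of_tendsto_nhds_of_eventually_within
    · exact ((continuous_id.add continuous_const).tendsto x₀).mono_left nhdsWithin_le_nhds
    · filter_upwards [self_mem_nhdsWithin] with x hx
      exact add_lt_add_left hx θ
  have hptr : ∀ θ : ℝ, Tendsto (fun x : ℝ => sawtooth (x + θ)) (𝓝[>] x₀) (𝓝 (gp θ)) :=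
    fun θ => (sawtooth_tendsto_right (x₀ + θ)).comp (haddr θ)
  have hptl : ∀ θ : ℝ, Tendsto (fun x : ℝ => sawtooth (x + θ)) (𝓝[<] x₀) (𝓝 (gm θ)) :=
    fun θ => (sawtooth_tendsto_left (x₀ + θ)).comp (haddl θ)
  have hmeas : ∀ x : ℝ, AEStronglyMeasurable (fun θ : ℝ => sawtooth (x + θ)) μ := fun x =>
    (measurable_sawtooth.comp (measurable_const.add measurable_id)).aestronglyMeasurable
  have hbd : ∀ x : ℝ, ∀ᵐ θ ∂μ, ‖sawtooth (x + θ)‖ ≤ Real.pi := fun x =>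
    ae_of_all μ fun θ => by simpa [Real.norm_eq_abs] using abs_sawtooth_le (x + θ)
  have hLp : Tendsto (fun x : ℝ => ∫ θ : ℝ, sawtooth (x + θ) ∂μ) (𝓝[>] x₀)
      (𝓝 (∫ θ, gp θ ∂μ)) :=
    tendsto_integral_filter_of_dominated_convergence (fun _ => Real.pi)
      (Eventually.of_forall hmeas) (Eventually.of_forall hbd) (integrable_const _)
      (ae_of_all μ hptr)
  have hLm : Tendsto (fun x : ℝ => ∫ θ : ℝ, sawtooth (x + θ) ∂μ) (𝓝[<] x₀)
      (𝓝 (∫ θ, gm θ ∂μ)) :=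
    tendsto_integral_filter_of_dominated_convergence (fun _ => Real.pi)
      (Eventually.of_forall hmeas) (Eventually.of_forall hbd) (integrable_const _)
      (ae_of_all μ hptl)
  have hTp : Tendsto F (𝓝[>] x₀) (𝓝 (∫ θ, gp θ ∂μ)) :=
    hLp.congr fun x => (hF x).symm
  have hTm : Tendsto F (𝓝[<] x₀) (𝓝 (∫ θ, gm θ ∂μ)) :=
    hLm.congr fun x => (hF x).symm
  -- integrability
  have hgp_meas : Measurable gp :=
    (measurable_const.sub (measurable_const.mul
      (((measurable_const.add measurable_id).div_const _).fract))).div_const 2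
  have hgp_int : Integrable gp μ := by
    refine ⟨hgp_meas.aestronglyMeasurable, HasFiniteIntegral.of_bounded (C := Real.pi) ?_⟩
    refine ae_of_all μ fun θ => ?_
    have h1 := Int.fract_nonneg ((x₀ + θ) / (2 * Real.pi))
    have h2 := Int.fract_lt_one ((x₀ + θ) / (2 * Real.pi))
    rw [Real.norm_eq_abs, abs_le]
    constructor <;> simp only [hgp_def] <;> nlinarith [Real.pi_pos]
  have hind_int : Integrable (A.indicator (fun _ : ℝ => Real.pi)) μ :=
    (integrable_const _).indicator hAm
  -- gm = gp - π · 1_A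
  have hfract0 : ∀ θ ∈ A, Int.fract ((x₀ + θ) / (2 * Real.pi)) = 0 := by
    rintro θ ⟨k, hk⟩
    have h2 : (x₀ + θ) / (2 * Real.pi) = (k : ℝ) := by
      rw [hk]; field_simp
    rw [h2]
    exact Int.fract_intCast k
  have hgm_eq : ∀ θ : ℝ, gm θ = gp θ - A.indicator (fun _ => Real.pi) θ := by
    intro θ
    by_cases h : θ ∈ A
    · rw [Set.indicator_of_mem h]
      simp only [hgm_def, hgp_def, if_pos (show ∃ k : ℤ, x₀ + θ = 2 * Real.pi * k from h),
        hfract0 θ h]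
      ring
    · rw [Set.indicator_of_notMem h]
      simp only [hgm_def, hgp_def, if_neg (show ¬∃ k : ℤ, x₀ + θ = 2 * Real.pi * k from h)]
      ring
  have hint_gm : ∫ θ, gm θ ∂μ = (∫ θ, gp θ ∂μ) - (μ A).toReal * Real.pi := by
    have : ∫ θ, gm θ ∂μ = ∫ θ, (gp θ - A.indicator (fun _ => Real.pi) θ) ∂μ :=
      integral_congr_ae (ae_of_all μ hgm_eq)
    rw [this, integral_sub hgp_int hind_int, integral_indicator_const _ hAm, smul_eq_mul, measureReal_def]
  -- the jump set
  have hpt_mem : pt ∈ Set.Ico 0 (2 * Real.pi) := by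
    constructor
    · exact mul_nonneg two_pi_pos.le (Int.fract_nonneg _)
    · calc pt < 2 * Real.pi * 1 :=
          (mul_lt_mul_iff_right₀ two_pi_pos).2 (Int.fract_lt_one _)
      _ = 2 * Real.pi := mul_one _
  have hpt_A : pt ∈ A := by
    refine ⟨-⌊-x₀ / (2 * Real.pi)⌋, ?_⟩
    rw [hpt_def, Int.fract]
    push_cast
    field_simp
    ring
  have hset : {θ : ℝ | θ ∈ Set.Ico 0 (2 * Real.pi) ∧ ∃ k : ℤ, x₀ + θ = 2 * Real.pi * k}
      = {pt} := by
    ext θ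
    simp only [Set.mem_setOf_eq, Set.mem_singleton_iff]
    constructor
    · rintro ⟨hθ, k, hk⟩
      have hθ2π : θ / (2 * Real.pi) = (k : ℝ) + (-x₀ / (2 * Real.pi)) := by
        field_simp
        linarith
      have hfr : Int.fract (θ / (2 * Real.pi)) = Int.fract (-x₀ / (2 * Real.pi)) := by
        rw [hθ2π, Int.fract_intCast_add]
      have hself : Int.fract (θ / (2 * Real.pi)) = θ / (2 * Real.pi) := by
        rw [Int.fract_eq_self]
        constructor
        · exact div_nonneg hθ.1 two_pi_pos.le
        · rw [div_lt_one two_pi_pos]; exact hθ.2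
      rw [hpt_def, ← hfr, hself]
      field_simp
    · rintro rfl
      exact ⟨hpt_mem, hpt_A⟩
  have hμA : μ A = μ {pt} := by
    apply le_antisymm
    · have hsub : A ⊆ {pt} ∪ (Set.Ico 0 (2 * Real.pi))ᶜ := by
        intro θ hθ
        by_cases h : θ ∈ Set.Ico 0 (2 * Real.pi)
        · left
          have : θ ∈ {θ : ℝ | θ ∈ Set.Ico 0 (2 * Real.pi) ∧
              ∃ k : ℤ, x₀ + θ = 2 * Real.pi * k} := ⟨h, hθ⟩
          rw [hset] at this
          exact this
        · right; exact h
      calc μ A ≤ μ ({pt} ∪ (Set.Ico 0 (2 * Real.pi))ᶜ) := measure_mono hsub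
        _ ≤ μ {pt} + μ (Set.Ico 0 (2 * Real.pi))ᶜ := measure_union_le _ _
        _ = μ {pt} := by rw [hsupp, add_zero]
    · exact measure_mono (Set.singleton_subset_iff.2 hpt_A)
  have hjump : (∫ θ, gp θ ∂μ) - (∫ θ, gm θ ∂μ) = Real.pi * (μ {pt}).toReal := by
    rw [hint_gm, hμA]; ring
  refine ⟨∫ θ, gp θ ∂μ, ∫ θ, gm θ ∂μ, hTp, hTm, ?_, ?_⟩
  · rw [hset, hjump]
  · constructor
    · intro hc
      have h1 : Tendsto F (𝓝[>] x₀) (𝓝 (F x₀)) :=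
        hc.tendsto.mono_left nhdsWithin_le_nhds
      have h2 : Tendsto F (𝓝[<] x₀) (𝓝 (F x₀)) :=
        hc.tendsto.mono_left nhdsWithin_le_nhds
      have e1 : (∫ θ, gp θ ∂μ) = F x₀ := tendsto_nhds_unique hTp h1
      have e2 : (∫ θ, gm θ ∂μ) = F x₀ := tendsto_nhds_unique hTm h2
      have : Real.pi * (μ {pt}).toReal = 0 := by rw [← hjump, e1, e2, sub_self]
      have h3 : (μ {pt}).toReal = 0 := by
        rcases mul_eq_zero.1 this with h | h
        · exact absurd h Real.pi_ne_zero
        · exact h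
      have h4 := ENNReal.toReal_eq_zero_iff _ |>.1 h3
      rcases h4 with h | h
      · exact h
      · exact absurd h (measure_ne_top μ _)
    · intro h0
      have hμA0 : μ A = 0 := hμA.trans h0
      have hgp_saw : ∀ θ : ℝ, θ ∉ A → gp θ = sawtooth (x₀ + θ) := by
        intro θ hA
        have hA' : ¬∃ k : ℤ, x₀ + θ = 2 * Real.pi * k := hA
        simp only [hgp_def, sawtooth, if_neg hA']
      have hgm_saw : ∀ θ : ℝ, θ ∉ A → gm θ = sawtooth (x₀ + θ) := by
        intro θ hA
        have hA' : ¬∃ k : ℤ, x₀ + θ = 2 * Real.pi * k := hA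
        simp only [hgm_def, sawtooth, if_neg hA']
      have haegp : gp =ᵐ[μ] fun θ => sawtooth (x₀ + θ) := by
        refine measure_mono_null (fun θ hθ => ?_) hμA0
        by_contra hA
        exact hθ (hgp_saw θ hA)
      have haegm : gm =ᵐ[μ] fun θ => sawtooth (x₀ + θ) := by
        refine measure_mono_null (fun θ hθ => ?_) hμA0
        by_contra hA
        exact hθ (hgm_saw θ hA)
      have e1 : (∫ θ, gp θ ∂μ) = F x₀ := by
        rw [integral_congr_ae haegp, hF x₀]
      have e2 : (∫ θ, gm θ ∂μ) = F x₀ := by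
        rw [integral_congr_ae haegm, hF x₀]
      have hIci : 𝓝[≥] x₀ = pure x₀ ⊔ 𝓝[>] x₀ := by
        have hs : Set.Ici x₀ = {x₀} ∪ Set.Ioi x₀ := by
          rw [Set.union_comm]; exact (Set.Ioi_union_left).symm
        rw [hs, nhdsWithin_union, nhdsWithin_singleton]
      rw [ContinuousAt, ← nhdsLT_sup_nhdsGE x₀, tendsto_sup, hIci, tendsto_sup]
      exact ⟨e2 ▸ hTm, tendsto_pure_nhds F x₀, e1 ▸ hTp⟩
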